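/- arXiv:2310.00265 — 6 statements merged into one kernel-verified Lean document; each statement's English description precedes it below -/
import Mathlib

section
/- Let finite index sets I_j (j ≥ 0) and elements k_{i_j} ∈ Q̄ for i_j ∈ I_j be given, all lying in a fixed finite subset L of Q̄, such that for every j, either all k_{i_j} (i_j ∈ I_j) lie in L \ {∞, -∞}, or all lie in {∞, -∞}. Then limsup over j of (max over i_j ∈ I_j of k_{i_j}) equals the supremum over all choice sequences (i_j)_j ∈ I₀ × I₁ × ⋯ of limsup of (k_{i_j})_j, where limsup is defined as in K₂. -/
open Classical

/-- The extended rationals `ℚ ∪ {∞, -∞}`. -/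
abbrev Qbar : Type := WithBot (WithTop ℚ)

/-- Supremum of a finite nonempty set of extended rationals
(junk value `⊥` otherwise). -/
noncomputable def ssup (S : Set Qbar) : Qbar :=
  if h : S.Finite ∧ S.Nonempty then
    h.1.toFinset.max' ((Set.Finite.toFinset_nonempty h.1).mpr h.2)
  else ⊥

/-- Infimum of a finite nonempty set of extended rationals
(junk value `⊤` otherwise). -/
noncomputable def sinf (S : Set Qbar) : Qbar :=
  if h : S.Finite ∧ S.Nonempty then
    h.1.toFinset.min' ((Set.Finite.toFinset_nonempty h.1).mpr h.2)
  else ⊤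

/-- The `limsup` ω-valuation function of `K₂`. -/
noncomputable def qlimsup (d : ℕ → Qbar) : Qbar :=
  if ∃ i, d i = ⊥ then ⊥
  else if ∀ i, d i = ⊤ then ⊤
  else if {i | d i ≠ ⊤}.Infinite then
    sinf (Set.range fun i => ssup {v | ∃ k, i ≤ k ∧ d k = v ∧ v ≠ ⊤})
  else ssup {v | ∃ i, d i = v ∧ v ≠ ⊤}

/-- The `liminf` ω-valuation function of `K₁`. -/
noncomputable def qliminf (d : ℕ → Qbar) : Qbar :=
  if ∃ i, d i = ⊥ then ⊥
  else if ∀ i, d i = ⊤ then ⊤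
  else if {i | d i ≠ ⊤}.Infinite then
    ssup (Set.range fun i => sinf {v | ∃ k, i ≤ k ∧ d k = v ∧ v ≠ ⊤})
  else sinf {v | ∃ i, d i = v ∧ v ≠ ⊤}

/-- The `sup₋∞` ω-valuation function of `K₃`. -/
noncomputable def qsupbot (d : ℕ → Qbar) : Qbar :=
  if ∃ i, d i = ⊥ then ⊥
  else if ∀ i, d i = ⊤ then ⊤
  else ssup {v | ∃ i, d i = v ∧ v ≠ ⊤}

/-- Prepend an element to an infinite sequence. -/
def qcons (a : Qbar) (d : ℕ → Qbar) : ℕ → Qbar :=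
  fun n => if n = 0 then a else d (n - 1)



lemma ssup_mem {S : Set Qbar} (hf : S.Finite) (hn : S.Nonempty) : ssup S ∈ S := by
  rw [ssup, dif_pos ⟨hf, hn⟩]
  have := Finset.max'_mem hf.toFinset ((Set.Finite.toFinset_nonempty hf).mpr hn)
  simpa using this

lemma le_ssup {S : Set Qbar} (hf : S.Finite) {a : Qbar} (ha : a ∈ S) : a ≤ ssup S := by
  rw [ssup, dif_pos ⟨hf, ⟨a, ha⟩⟩]
  exact Finset.le_max' _ a (hf.mem_toFinset.mpr ha)

lemma ssup_le {S : Set Qbar} (hf : S.Finite) (hn : S.Nonempty) {b : Qbar}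
    (h : ∀ a ∈ S, a ≤ b) : ssup S ≤ b :=
  h _ (ssup_mem hf hn)

lemma ssup_eq {S : Set Qbar} (hf : S.Finite) {a : Qbar} (ha : a ∈ S)
    (h : ∀ b ∈ S, b ≤ a) : ssup S = a :=
  le_antisymm (ssup_le hf ⟨a, ha⟩ h) (le_ssup hf ha)

lemma sinf_mem {S : Set Qbar} (hf : S.Finite) (hn : S.Nonempty) : sinf S ∈ S := by
  rw [sinf, dif_pos ⟨hf, hn⟩]
  have := Finset.min'_mem hf.toFinset ((Set.Finite.toFinset_nonempty hf).mpr hn)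
  simpa using this

lemma sinf_le {S : Set Qbar} (hf : S.Finite) {a : Qbar} (ha : a ∈ S) : sinf S ≤ a := by
  rw [sinf, dif_pos ⟨hf, ⟨a, ha⟩⟩]
  exact Finset.min'_le _ a (hf.mem_toFinset.mpr ha)

lemma tail_subset (d : ℕ → Qbar) (i : ℕ) :
    {v | ∃ k, i ≤ k ∧ d k = v ∧ v ≠ ⊤} ⊆ Set.range d := by
  rintro v ⟨k, -, hk, -⟩; exact ⟨k, hk⟩

lemma tail_nonempty {d : ℕ → Qbar} (hinf : {i | d i ≠ ⊤}.Infinite) (i : ℕ) :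
    {v | ∃ k, i ≤ k ∧ d k = v ∧ v ≠ ⊤}.Nonempty := by
  obtain ⟨m, hm, him⟩ := hinf.exists_gt i
  exact ⟨d m, m, him.le, rfl, hm⟩

lemma qlimsup_mem {d : ℕ → Qbar} (hf : (Set.range d).Finite) :
    qlimsup d ∈ insert (⊥ : Qbar) (insert ⊤ (Set.range d)) := by
  unfold qlimsup
  split_ifs with h1 h2 h3
  · simp
  · simp
  · have hsub : (Set.range fun i => ssup {v | ∃ k, i ≤ k ∧ d k = v ∧ v ≠ ⊤}) ⊆ Set.range d := by
      rintro v ⟨i, rfl⟩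
      exact tail_subset d i (ssup_mem (hf.subset (tail_subset d i)) (tail_nonempty h3 i))
    have : sinf (Set.range fun i => ssup {v | ∃ k, i ≤ k ∧ d k = v ∧ v ≠ ⊤}) ∈ Set.range d :=
      hsub (sinf_mem (hf.subset hsub) ⟨_, 0, rfl⟩)
    exact Set.mem_insert_of_mem _ (Set.mem_insert_of_mem _ this)
  · have hsub : {v | ∃ i, d i = v ∧ v ≠ ⊤} ⊆ Set.range d := by
      rintro v ⟨i, hk, -⟩; exact ⟨i, hk⟩
    push_neg at h2
    obtain ⟨i, hi⟩ := h2
    have : ssup {v | ∃ i, d i = v ∧ v ≠ ⊤} ∈ Set.range d :=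
      hsub (ssup_mem (hf.subset hsub) ⟨d i, i, rfl, hi⟩)
    exact Set.mem_insert_of_mem _ (Set.mem_insert_of_mem _ this)

lemma qlimsup_mono {d e : ℕ → Qbar} (hd : (Set.range d).Finite) (he : (Set.range e).Finite)
    (hle : ∀ j, e j ≤ d j)
    (htop : ∀ j, d j = ⊤ → e j = ⊤ ∨ e j = ⊥) :
    qlimsup e ≤ qlimsup d := by
  by_cases hbot : ∃ i, e i = ⊥
  · rw [qlimsup, if_pos hbot]; exact bot_le
  have hnbot : ∀ i, e i ≠ ⊥ := by push_neg at hbot; exact hbot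
  have hdbot : ¬∃ i, d i = ⊥ := by
    rintro ⟨i, hi⟩
    exact hnbot i (le_bot_iff.mp (hi ▸ hle i))
  have hiff : ∀ j, e j = ⊤ ↔ d j = ⊤ := by
    intro j
    constructor
    · intro h; exact top_le_iff.mp (h ▸ hle j)
    · intro h; rcases htop j h with h' | h'
      · exact h'
      · exact absurd h' (hnbot j)
  by_cases hall : ∀ i, d i = ⊤
  · have hD : qlimsup d = ⊤ := by rw [qlimsup, if_neg hdbot, if_pos hall]
    rw [hD]; exact le_top
  have healld : ¬∀ i, e i = ⊤ := fun h => hall (fun i => (hiff i).mp (h i))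
  have hset : {i | e i ≠ ⊤} = {i | d i ≠ ⊤} := by
    ext i; simp [hiff i]
  rw [qlimsup, qlimsup, if_neg hbot, if_neg hdbot, if_neg healld, if_neg hall, hset]
  by_cases hinf : {i | d i ≠ ⊤}.Infinite
  · rw [if_pos hinf, if_pos hinf]
    set gE := fun i => ssup {v | ∃ k, i ≤ k ∧ e k = v ∧ v ≠ ⊤} with hgE
    set gD := fun i => ssup {v | ∃ k, i ≤ k ∧ d k = v ∧ v ≠ ⊤} with hgD
    have heinf : {i | e i ≠ ⊤}.Infinite := by rw [hset]; exact hinf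
    have hgle : ∀ i, gE i ≤ gD i := by
      intro i
      apply ssup_le (he.subset (tail_subset e i)) (tail_nonempty heinf i)
      rintro v ⟨m, him, rfl, hv⟩
      have hdm : d m ≠ ⊤ := fun h => hv ((hiff m).mpr h)
      exact le_trans (hle m) (le_ssup (hd.subset (tail_subset d i)) ⟨m, him, rfl, hdm⟩)
    have hsubE : Set.range gE ⊆ Set.range e := by
      rintro v ⟨i, rfl⟩
      exact tail_subset e i (ssup_mem (he.subset (tail_subset e i)) (tail_nonempty heinf i))
    have hsubD : Set.range gD ⊆ Set.range d := by
      rintro v ⟨i, rfl⟩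
      exact tail_subset d i (ssup_mem (hd.subset (tail_subset d i)) (tail_nonempty hinf i))
    obtain ⟨i₁, hi₁⟩ : sinf (Set.range gD) ∈ Set.range gD :=
      sinf_mem (hd.subset hsubD) ⟨_, 0, rfl⟩
    calc sinf (Set.range gE) ≤ gE i₁ := sinf_le (he.subset hsubE) ⟨i₁, rfl⟩
      _ ≤ gD i₁ := hgle i₁
      _ = sinf (Set.range gD) := hi₁
  · rw [if_neg hinf, if_neg hinf]
    have hsubE : {v | ∃ i, e i = v ∧ v ≠ ⊤} ⊆ Set.range e := by
      rintro v ⟨i, hk, -⟩; exact ⟨i, hk⟩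
    have hsubD : {v | ∃ i, d i = v ∧ v ≠ ⊤} ⊆ Set.range d := by
      rintro v ⟨i, hk, -⟩; exact ⟨i, hk⟩
    push_neg at healld
    obtain ⟨i, hi⟩ := healld
    apply ssup_le (he.subset hsubE) ⟨e i, i, rfl, hi⟩
    rintro v ⟨m, rfl, hv⟩
    have hdm : d m ≠ ⊤ := fun h => hv ((hiff m).mpr h)
    exact le_trans (hle m) (le_ssup (hd.subset hsubD) ⟨m, rfl, hdm⟩)

/-- Restricted distributivity of limsup over finite sums (Property 1):
limsup over j of (max over i ∈ I j of k j i) equals the supremum over all choice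
sequences f ∈ Π_j I j of limsup of (k j (f j))_j. -/
theorem qlimsup_distrib {ι : Type*} (I : ℕ → Set ι)
    (hfinI : ∀ j, (I j).Finite) (hneI : ∀ j, (I j).Nonempty)
    (k : ℕ → ι → Qbar) (L : Set Qbar) (hL : L.Finite)
    (hmem : ∀ j, ∀ i ∈ I j, k j i ∈ L)
    (hcond : ∀ j, (∀ i ∈ I j, k j i ∈ L \ ({⊤, ⊥} : Set Qbar)) ∨
      (∀ i ∈ I j, k j i ∈ ({⊤, ⊥} : Set Qbar))) :
    qlimsup (fun j => ssup {v | ∃ i ∈ I j, k j i = v}) =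
      ssup {v | ∃ f : ℕ → ι, (∀ j, f j ∈ I j) ∧
        qlimsup (fun j => k j (f j)) = v} := by
  set d : ℕ → Qbar := fun j => ssup {v | ∃ i ∈ I j, k j i = v} with hdd
  have hVfin : ∀ j, {v | ∃ i ∈ I j, k j i = v}.Finite := by
    intro j
    have h : {v | ∃ i ∈ I j, k j i = v} = (k j) '' (I j) := by
      ext v; simp [Set.mem_image]
    rw [h]; exact (hfinI j).image _
  have hVne : ∀ j, {v | ∃ i ∈ I j, k j i = v}.Nonempty := fun j =>
    (hneI j).elim fun i hi => ⟨k j i, i, hi, rfl⟩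
  have hdm : ∀ j, ∃ i ∈ I j, k j i = d j := fun j => ssup_mem (hVfin j) (hVne j)
  have hub : ∀ j, ∀ i ∈ I j, k j i ≤ d j := fun j i hi => le_ssup (hVfin j) ⟨i, hi, rfl⟩
  choose g hg1 hg2 using hdm
  have hdfin : (Set.range d).Finite := by
    apply hL.subset
    rintro v ⟨j, rfl⟩
    exact hg2 j ▸ hmem j (g j) (hg1 j)
  have hmemR : qlimsup d ∈ {v | ∃ f : ℕ → ι, (∀ j, f j ∈ I j) ∧
      qlimsup (fun j => k j (f j)) = v} := by
    refine ⟨g, hg1, ?_⟩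
    congr 1
    funext j
    exact hg2 j
  have hRsub : {v | ∃ f : ℕ → ι, (∀ j, f j ∈ I j) ∧ qlimsup (fun j => k j (f j)) = v}
      ⊆ insert ⊥ (insert ⊤ L) := by
    rintro v ⟨f, hf, rfl⟩
    have hre : Set.range (fun j => k j (f j)) ⊆ L := by
      rintro v ⟨j, rfl⟩; exact hmem j (f j) (hf j)
    exact Set.insert_subset_insert (Set.insert_subset_insert hre)
      (qlimsup_mem (hL.subset hre))
  have hRfin := ((hL.insert ⊤).insert ⊥).subset hRsub
  have hRub : ∀ v ∈ {v | ∃ f : ℕ → ι, (∀ j, f j ∈ I j) ∧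
      qlimsup (fun j => k j (f j)) = v}, v ≤ qlimsup d := by
    rintro v ⟨f, hf, rfl⟩
    have hre : Set.range (fun j => k j (f j)) ⊆ L := by
      rintro v ⟨j, rfl⟩; exact hmem j (f j) (hf j)
    refine qlimsup_mono hdfin (hL.subset hre) (fun j => hub j (f j) (hf j)) ?_
    intro j hdj
    rcases hcond j with hc | hc
    · exfalso
      have h := hc (g j) (hg1 j)
      rw [hg2 j, hdj] at h
      exact h.2 (Or.inl rfl)
    · have h := hc (f j) (hf j)
      simpa using h
  exact (ssup_eq hRfin hmemR hRub).symm
end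

section
/- Let finite index sets I_j (j ≥ 0) and elements k_{i_j} ∈ Q̄ for i_j ∈ I_j be given, all lying in a fixed finite subset L, with the property that for each j, either all k_{i_j} lie in L \ {∞, -∞} or all lie in {∞, -∞}. Then sup₋∞ over j of (max over i_j of k_{i_j}) equals the supremum over all choice sequences (i_j)_j of sup₋∞((k_{i_j})_j), where sup₋∞(d) = -∞ if some term is -∞, ∞ if all terms are ∞, and sup of the terms different from ∞ otherwise. -/
open Classical

lemma qsupbot_eq_bot {d : ℕ → Qbar} (h : ∃ i, d i = ⊥) : qsupbot d = ⊥ := by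
  rw [qsupbot, if_pos h]

lemma qsupbot_eq_top {d : ℕ → Qbar} (h : ∀ i, d i = ⊤) : qsupbot d = ⊤ := by
  rw [qsupbot, if_neg, if_pos h]
  rintro ⟨i, hi⟩
  rw [h i] at hi
  exact top_ne_bot hi

lemma qsupbot_eq_ssup {d : ℕ → Qbar} (h1 : ¬∃ i, d i = ⊥) (h2 : ¬∀ i, d i = ⊤) :
    qsupbot d = ssup {v | ∃ i, d i = v ∧ v ≠ ⊤} := by
  rw [qsupbot, if_neg h1, if_neg h2]

lemma qsupbot_mem_of {d : ℕ → Qbar} {L : Set Qbar} (hL : L.Finite) (hd : ∀ j, d j ∈ L) :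
    qsupbot d ∈ insert ⊥ (insert ⊤ L) := by
  by_cases h1 : ∃ i, d i = ⊥
  · rw [qsupbot_eq_bot h1]; exact Set.mem_insert _ _
  by_cases h2 : ∀ i, d i = ⊤
  · rw [qsupbot_eq_top h2]; exact Set.mem_insert_of_mem _ (Set.mem_insert _ _)
  · rw [qsupbot_eq_ssup h1 h2]
    push_neg at h2
    obtain ⟨i0, hi0⟩ := h2
    have hsub : {v | ∃ i, d i = v ∧ v ≠ ⊤} ⊆ L := by
      rintro v ⟨i, rfl, -⟩; exact hd i
    have hne : {v | ∃ i, d i = v ∧ v ≠ ⊤}.Nonempty := ⟨d i0, i0, rfl, hi0⟩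
    exact Set.mem_insert_of_mem _ (Set.mem_insert_of_mem _
      (hsub (ssup_mem (hL.subset hsub) hne)))

/-- Restricted distributivity of sup₋∞ over finite sums (Property 1):
sup₋∞ over j of (max over i ∈ I j of k j i) equals the supremum over all choice
sequences f ∈ Π_j I j of sup₋∞ of (k j (f j))_j. -/
theorem qsupbot_distrib {ι : Type*} (I : ℕ → Set ι)
    (hfinI : ∀ j, (I j).Finite) (hneI : ∀ j, (I j).Nonempty)
    (k : ℕ → ι → Qbar) (L : Set Qbar) (hL : L.Finite)
    (hmem : ∀ j, ∀ i ∈ I j, k j i ∈ L)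
    (hcond : ∀ j, (∀ i ∈ I j, k j i ∈ L \ ({⊤, ⊥} : Set Qbar)) ∨
      (∀ i ∈ I j, k j i ∈ ({⊤, ⊥} : Set Qbar))) :
    qsupbot (fun j => ssup {v | ∃ i ∈ I j, k j i = v}) =
      ssup {v | ∃ f : ℕ → ι, (∀ j, f j ∈ I j) ∧
        qsupbot (fun j => k j (f j)) = v} := by
  set m : ℕ → Qbar := fun j => ssup {v | ∃ i ∈ I j, k j i = v} with hmdef
  have hAfin : ∀ j, {v | ∃ i ∈ I j, k j i = v}.Finite := fun j => (hfinI j).image (k j)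
  have hAne : ∀ j, {v | ∃ i ∈ I j, k j i = v}.Nonempty :=
    fun j => ⟨k j (hneI j).some, ⟨(hneI j).some, (hneI j).some_mem, rfl⟩⟩
  have hmmem : ∀ j, ∃ i ∈ I j, k j i = m j := fun j => ssup_mem (hAfin j) (hAne j)
  have hmle : ∀ j, ∀ i ∈ I j, k j i ≤ m j := fun j i hi => le_ssup (hAfin j) ⟨i, hi, rfl⟩
  have hmL : ∀ j, m j ∈ L := by
    intro j
    obtain ⟨i, hi, he⟩ := hmmem j
    exact he ▸ hmem j i hi
  set S : Set Qbar := {v | ∃ f : ℕ → ι, (∀ j, f j ∈ I j) ∧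
    qsupbot (fun j => k j (f j)) = v} with hSdef
  have hSsub : S ⊆ insert ⊥ (insert ⊤ L) := by
    rintro v ⟨f, hf, rfl⟩
    exact qsupbot_mem_of hL (fun j => hmem j (f j) (hf j))
  have hSfin : S.Finite := ((hL.insert ⊤).insert ⊥).subset hSsub
  have hSne : S.Nonempty :=
    ⟨_, fun j => (hneI j).some, fun j => (hneI j).some_mem, rfl⟩
  by_cases hb : ∃ j, m j = ⊥
  · obtain ⟨j0, hj0⟩ := hb
    have hall : ∀ f : ℕ → ι, (∀ j, f j ∈ I j) → qsupbot (fun j => k j (f j)) = ⊥ := by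
      intro f hf
      exact qsupbot_eq_bot ⟨j0, le_bot_iff.mp (hj0 ▸ hmle j0 (f j0) (hf j0))⟩
    have hSsing : S = {⊥} := by
      apply Set.eq_singleton_iff_unique_mem.mpr
      refine ⟨⟨fun j => (hneI j).some, fun j => (hneI j).some_mem, hall (fun j => (hneI j).some) (fun j => (hneI j).some_mem)⟩, ?_⟩
      rintro v ⟨f, hf, rfl⟩
      exact hall f hf
    rw [qsupbot_eq_bot ⟨j0, hj0⟩, hSsing]
    have h1 := ssup_mem (Set.finite_singleton (⊥ : Qbar)) ⟨⊥, rfl⟩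
    exact (Set.mem_singleton_iff.mp h1).symm
  by_cases htop : ∀ j, m j = ⊤
  · choose g hg1 hg2 using hmmem
    have htmem : (⊤ : Qbar) ∈ S :=
      ⟨g, hg1, qsupbot_eq_top (fun j => by rw [hg2 j, htop j])⟩
    rw [qsupbot_eq_top htop]
    exact (top_le_iff.mp (le_ssup hSfin htmem)).symm
  · rw [qsupbot_eq_ssup hb htop]
    set M : Set Qbar := {v | ∃ i, m i = v ∧ v ≠ ⊤} with hMdef
    have hMsub : M ⊆ L := by rintro v ⟨j, rfl, -⟩; exact hmL j
    have hMfin : M.Finite := hL.subset hMsub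
    apply le_antisymm
    · -- ssup M ≤ ssup S
      choose g hg1 hg2 using hmmem
      have hfun : (fun j => k j (g j)) = m := funext fun j => hg2 j
      have hmemS : qsupbot m ∈ S := ⟨g, hg1, by rw [hfun]⟩
      rw [qsupbot_eq_ssup hb htop] at hmemS
      exact le_ssup hSfin hmemS
    · -- ssup S ≤ ssup M
      obtain ⟨f, hf, hv⟩ := ssup_mem hSfin hSne
      rw [← hv]
      by_cases hdb : ∃ j, k j (f j) = ⊥
      · rw [qsupbot_eq_bot hdb]; exact bot_le
      by_cases hdt : ∀ j, k j (f j) = ⊤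
      · exact absurd (fun j => top_le_iff.mp ((hdt j) ▸ hmle j (f j) (hf j))) htop
      rw [qsupbot_eq_ssup hdb hdt]
      have hTsub : {v | ∃ j, k j (f j) = v ∧ v ≠ ⊤} ⊆ L := by
        rintro v ⟨j, rfl, -⟩; exact hmem j (f j) (hf j)
      push_neg at hdt
      obtain ⟨j2, hj2⟩ := hdt
      have hTne : {v | ∃ j, k j (f j) = v ∧ v ≠ ⊤}.Nonempty := ⟨_, j2, rfl, hj2⟩
      obtain ⟨j3, hj3, hj3t⟩ := ssup_mem (hL.subset hTsub) hTne
      rw [← hj3]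
      by_cases hmt : m j3 = ⊤
      · exfalso
        rcases hcond j3 with hc | hc
        · obtain ⟨i, hi, he⟩ := hmmem j3
          have h := hc i hi
          rw [he, hmt] at h
          simp at h
        · have h := hc (f j3) (hf j3)
          simp only [Set.mem_insert_iff, Set.mem_singleton_iff] at h
          rcases h with h | h
          · exact hj3t (hj3 ▸ h)
          · exact hdb ⟨j3, h⟩
      · exact le_trans (hmle j3 (f j3) (hf j3)) (le_ssup hMfin ⟨j3, rfl, hmt⟩)
end

section
/- If φ₁, …, φ_n are safety formulas of LTL over atomic propositions AP (i.e., their languages L(φ_i) ⊆ (P(AP))^ω are safety properties) and k₁, …, k_n ∈ K are elements of an idempotent ordered complete monoid all satisfying k_i ≥ k for a fixed k ∈ K \ {0, 1}, then the series s(w) = Σ_{i : w ⊨ φ_i} k_i (where the sum is 0 if no φ_i holds in w) is k-safe. -/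
open Classical

/-- `splice w i u` is the infinite word obtained by following the prefix of `w`
of length `i` with the infinite word `u`. -/
def splice {A : Type*} (w : ℕ → A) (i : ℕ) (u : ℕ → A) : ℕ → A :=
  fun n => if n < i then w n else u (n - i)

/-- The natural order of an idempotent monoid: `x ≤ y` iff `y = y + x`. -/
def natLe {K : Type*} [Add K] (x y : K) : Prop := y = y + x

/-- `L` is a safety language. -/
def IsSafety {A : Type*} (L : Set (ℕ → A)) : Prop :=
  ∀ w : ℕ → A, (∀ i : ℕ, 0 < i → ∃ u : ℕ → A, splice w i u ∈ L) → w ∈ L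

/-- A series `s : A^ω → K` is `k`-safe. -/
def kSafe {A K : Type*} [Add K] (k : K) (s : (ℕ → A) → K) : Prop :=
  ∀ w : ℕ → A,
    (∀ i : ℕ, 0 < i → ∃ u : ℕ → A, natLe k (s (splice w i u))) → natLe k (s w)

lemma splice_of_agree {A : Type*} {w v : ℕ → A} {m : ℕ}
    (h : ∀ j, j < m → v j = w j) : v = splice w m (fun j => v (j + m)) := by
  funext j
  simp only [splice]
  split_ifs with hj
  · exact h j hj
  · congr 1
    omega

/-- If `L₁, …, Lₙ` are safety languages over `P(AP)` (the languages of safety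
`LTL` formulas) and `k₁, …, kₙ ≥ k`, then the series
`s(w) = Σ_{i : w ∈ Lᵢ} kᵢ` is `k`-safe. -/
theorem kStep_kSafe {AP K : Type*} [AddCommMonoid K]
    (idem : ∀ x : K, x + x = x)
    (total : ∀ x y : K, natLe x y ∨ natLe y x)
    (one : K) (k : K) (hk0 : k ≠ 0) (hk1 : k ≠ one)
    (n : ℕ) (L : Fin n → Set (ℕ → Set AP))
    (hsafe : ∀ i, IsSafety (L i))
    (kk : Fin n → K) (hkk : ∀ i, natLe k (kk i)) :
    kSafe k (fun w => ∑ i : Fin n, if w ∈ L i then kk i else 0) := by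
  intro w hw
  by_cases hex : ∃ i, ∀ m : ℕ, 0 < m → ∃ u, splice w m u ∈ L i
  · obtain ⟨i, hi⟩ := hex
    have hwL : w ∈ L i := hsafe i w hi
    show (∑ j : Fin n, if w ∈ L j then kk j else 0)
        = (∑ j : Fin n, if w ∈ L j then kk j else 0) + k
    rw [← Finset.add_sum_erase Finset.univ _ (Finset.mem_univ i)]
    rw [if_pos hwL, add_right_comm, ← hkk i]
  · push_neg at hex
    choose m hmpos hm using hex
    set M : ℕ := (Finset.univ.sup m) + 1 with hM
    obtain ⟨u, hu⟩ := hw M (Nat.succ_pos _)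
    exfalso
    have hzero : (∑ j : Fin n, if splice w M u ∈ L j then kk j else 0) = 0 := by
      apply Finset.sum_eq_zero
      intro j _
      rw [if_neg]
      intro hmem
      have hagree : ∀ l, l < m j → splice w M u l = w l := by
        intro l hl
        have : l < M := lt_of_lt_of_le hl
          (le_trans (Finset.le_sup (Finset.mem_univ j)) (Nat.le_succ _))
        simp [splice, this]
      have := splice_of_agree hagree
      exact hm j _ (this ▸ hmem)
    have hu' : natLe k (0:K) := by simpa only [hzero] using hu
    exact hk0 (by simpa [natLe] using hu'.symm)
end

section
/- Let K be an idempotent complete monoid with total natural order, A an alphabet, k ∈ K \ {0, 1}, and let s₁, s₂ : A^ω → K both be k-safe infinitary series. Then the pointwise sum s₁ + s₂ (defined by (s₁ + s₂)(w) = s₁(w) + s₂(w)) is k-safe. -/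
lemma splice_splice {A : Type*} (w : ℕ → A) (i j : ℕ) (u : ℕ → A) (h : i ≤ j) :
    splice w i (fun n => splice w j u (i + n)) = splice w j u := by
  funext n
  simp only [splice]
  by_cases hn : n < i
  · simp [hn, lt_of_lt_of_le hn h]
  · have : i + (n - i) = n := by omega
    simp [hn, this]

lemma natLe_add_right {K : Type*} [AddCommMonoid K] {k a : K} (h : natLe k a) (b : K) :
    natLe k (a + b) := by
  unfold natLe at *
  rw [show a + b + k = (a + k) + b by abel, ← h]

lemma natLe_split {K : Type*} [AddCommMonoid K]
    (total : ∀ x y : K, natLe x y ∨ natLe y x) {k a b : K}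
    (h : natLe k (a + b)) : natLe k a ∨ natLe k b := by
  rcases total a b with hab | hba
  · right
    unfold natLe at *
    rw [add_comm, ← hab] at h
    exact h
  · left
    unfold natLe at *
    rw [← hba] at h
    exact h

/-- The pointwise sum of two `k`-safe series is `k`-safe. -/
theorem kSafe_add {A K : Type*} [AddCommMonoid K]
    (idem : ∀ x : K, x + x = x)
    (total : ∀ x y : K, natLe x y ∨ natLe y x)
    (one : K) (k : K) (hk0 : k ≠ 0) (hk1 : k ≠ one)
    (s₁ s₂ : (ℕ → A) → K) (h₁ : kSafe k s₁) (h₂ : kSafe k s₂) :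
    kSafe k (fun w => s₁ w + s₂ w) := by
  intro w hw
  simp only
  by_cases hc : ∀ i : ℕ, 0 < i → ∃ u : ℕ → A, natLe k (s₁ (splice w i u))
  · exact natLe_add_right (h₁ w hc) _
  · push_neg at hc
    obtain ⟨i₁, hi₁pos, hi₁⟩ := hc
    have h2 : ∀ i : ℕ, 0 < i → ∃ u : ℕ → A, natLe k (s₂ (splice w i u)) := by
      intro i hi
      obtain ⟨u, hu⟩ := hw (max i i₁) (lt_of_lt_of_le hi (le_max_left _ _))
      rcases natLe_split total hu with h1 | h2
      · exfalso
        have := hi₁ (fun n => splice w (max i i₁) u (i₁ + n))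
        rw [splice_splice w i₁ (max i i₁) u (le_max_right _ _)] at this
        exact this h1
      · refine ⟨fun n => splice w (max i i₁) u (i + n), ?_⟩
        rw [splice_splice w i (max i i₁) u (le_max_left _ _)]
        exact h2
    have : natLe k (s₂ w) := h₂ w h2
    rw [add_comm]
    exact natLe_add_right this _
end

section
/- Let K be an idempotent complete monoid with total natural order, A an alphabet, k ∈ K \ {0, 1}, and s : A^ω → K a k-safe series. Then the series s' defined by s'(w) = s(w_{≥1}) (i.e., s applied to the suffix of w starting at position 1) is k-safe. -/
/-- If `s` is `k`-safe then so is the series `w ↦ s (w_{≥1})` obtained by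
applying `s` to the suffix starting at position `1` (the "next" operator). -/
theorem kSafe_shift {A K : Type*} [AddCommMonoid K]
    (idem : ∀ x : K, x + x = x)
    (total : ∀ x y : K, natLe x y ∨ natLe y x)
    (one : K) (k : K) (hk0 : k ≠ 0) (hk1 : k ≠ one)
    (s : (ℕ → A) → K) (hs : kSafe k s) :
    kSafe k (fun w => s (fun n => w (n + 1))) := by
  intro w hw
  apply hs
  intro i hi
  obtain ⟨u, hu⟩ := hw (i + 1) (Nat.succ_pos i)
  refine ⟨u, ?_⟩
  have heq : (fun n => splice w (i + 1) u (n + 1)) = splice (fun n => w (n + 1)) i u := by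
    funext n
    simp only [splice]
    by_cases h : n < i
    · rw [if_pos h, if_pos (by omega)]
    · rw [if_neg h, if_neg (by omega)]
      congr 1
      omega
  simp only [] at hu
  rwa [heq] at hu
end

section
/- Over the alphabet A = {a, b}, consider the series R into the extended rationals defined by R(w) = 3^{k+2} if w ∈ a^k b⁺ A^ω for some k > 0, R(w) = 3 if w = a^ω, and R(w) = -∞ otherwise. Then R is 3-safe but not 4-safe, where k-safety uses the standard order on the extended rationals. -/
open Classical

/-- A series `s : A^ω → Q̄` is `k`-safe (for the standard order on `Q̄`). -/
def kSafeQ {A : Type*} (k : Qbar) (s : (ℕ → A) → Qbar) : Prop :=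
  ∀ w : ℕ → A,
    (∀ i : ℕ, 0 < i → ∃ u : ℕ → A, k ≤ s (splice w i u)) → k ≤ s w

/-- The series `R` over `A = {a, b}` (with `a := true`, `b := false`):
`R(w) = 3^(k+2)` if `w ∈ aᵏ b⁺ A^ω` with `k > 0`, `R(w) = 3` if `w = a^ω`,
and `R(w) = -∞` otherwise. -/
noncomputable def R (w : ℕ → Bool) : Qbar :=
  if h : ∃ k : ℕ, 0 < k ∧ (∀ i < k, w i = true) ∧ w k = false then
    ((((3 : ℚ) ^ (h.choose + 2) : ℚ) : WithTop ℚ) : Qbar)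
  else if ∀ i, w i = true then (((3 : ℚ) : WithTop ℚ) : Qbar)
  else ⊥

lemma R_val (w : ℕ → Bool) (k : ℕ) (hk : 0 < k) (h1 : ∀ i < k, w i = true)
    (h2 : w k = false) :
    R w = ((((3 : ℚ) ^ (k + 2) : ℚ) : WithTop ℚ) : Qbar) := by
  have h : ∃ k : ℕ, 0 < k ∧ (∀ i < k, w i = true) ∧ w k = false :=
    ⟨k, hk, h1, h2⟩
  have hspec := h.choose_spec
  have hkeq : h.choose = k := by
    rcases lt_trichotomy h.choose k with hlt | heq | hgt
    · have := h1 _ hlt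
      rw [this] at hspec
      exact absurd hspec.2.2 (by simp)
    · exact heq
    · have := hspec.2.1 k hgt
      rw [h2] at this
      exact absurd this (by simp)
  rw [R, dif_pos h, hkeq]

lemma R_bot (w : ℕ → Bool) (h0 : w 0 = false) : R w = ⊥ := by
  rw [R, dif_neg, if_neg]
  · intro h
    have := h 0
    rw [h0] at this
    exact absurd this (by simp)
  · rintro ⟨k, hk, h1, -⟩
    have := h1 0 hk
    rw [h0] at this
    exact absurd this (by simp)

lemma R_aomega : R (fun _ => true) = (((3 : ℚ) : WithTop ℚ) : Qbar) := by
  rw [R, dif_neg, if_pos (fun _ => rfl)]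
  rintro ⟨k, -, -, h2⟩
  exact absurd h2 (by simp)

lemma coe_le_coe (p q : ℚ) :
    (((p : WithTop ℚ) : Qbar) ≤ ((q : WithTop ℚ) : Qbar)) ↔ p ≤ q := by
  rw [WithBot.coe_le_coe, WithTop.coe_le_coe]

/-- `R` is `3`-safe but not `4`-safe. -/
theorem R_three_safe_not_four_safe :
    kSafeQ (((3 : ℚ) : WithTop ℚ) : Qbar) R ∧
    ¬ kSafeQ (((4 : ℚ) : WithTop ℚ) : Qbar) R := by
  constructor
  · intro w hw
    by_cases h0 : w 0 = true
    · by_cases hex : ∃ k, w k = false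
      · obtain ⟨k, hk, hmin⟩ := Nat.findX hex
        have hkpos : 0 < k := by
          rcases Nat.eq_zero_or_pos k with h | h
          · rw [h, h0] at hk; exact absurd hk (by simp)
          · exact h
        have h1 : ∀ i < k, w i = true := fun i hi => by
          have := hmin i hi
          simpa using this
        rw [R_val w k hkpos h1 hk, coe_le_coe]
        calc (3 : ℚ) = 3 ^ 1 := (pow_one 3).symm
          _ ≤ 3 ^ (k + 2) := by
            apply pow_le_pow_right₀ (by norm_num)
            omega
      · push_neg at hex
        have : w = fun _ => true := funext fun i => by
          have := hex i; revert this; cases w i <;> simp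
        rw [this, R_aomega]
    · simp only [Bool.not_eq_true] at h0
      obtain ⟨u, hu⟩ := hw 1 one_pos
      have : splice w 1 u 0 = false := by simp [splice, h0]
      rw [R_bot _ this] at hu
      exact absurd hu (by simp)
  · intro h
    have := h (fun _ => true) ?_
    · rw [R_aomega, coe_le_coe] at this
      norm_num at this
    · intro i hi
      refine ⟨fun _ => false, ?_⟩
      have h1 : ∀ j < i, splice (fun _ => true) i (fun _ => false) j = true :=
        fun j hj => by simp [splice, hj]
      have h2 : splice (fun _ => true) i (fun _ => false) i = false := by
        simp [splice]
      rw [R_val _ i hi h1 h2, coe_le_coe]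
      calc (4 : ℚ) ≤ 3 ^ 3 := by norm_num
        _ ≤ 3 ^ (i + 2) := by
          apply pow_le_pow_right₀ (by norm_num)
          omega
end
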